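/- arXiv:2603.28940 — 2 statements merged into one kernel-verified Lean document; each statement's English description precedes it below -/
import Mathlib

section
/- For d ≥ 2 and 1 ≤ k ≤ n, the d-Hoggatt binomial coefficients satisfy the Pascal-type recurrence ⟨n+1 choose k⟩_d = f(d;n,k) · ⟨n choose k⟩_d + ⟨n choose k-1⟩_d, where f(d;n,k) = 1 + (1/⟨n+1-k⟩_d) · Σ_{i=1}^{d-1} ⟨n+1-k⟩_{d-i} · ⟨k⟩_i. -/
/-!
Since `⟨m⟩_j` is the coefficient of `X^j` in `(1 - X)^(-m)`, the identity
`(1 - X)^(-(a + b)) = (1 - X)^(-a) * (1 - X)^(-b)` gives the Vandermonde convolution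
`⟨a + b⟩_d = ∑_{i + j = d} ⟨a⟩_i ⟨b⟩_j`. For `a = n + 1 - k`, `b = k`, isolating the two terms
in which an index vanishes writes `⟨n + 1⟩_d = ⟨n + 1 - k⟩_d + ∑_{i=1}^{d-1} ⟨n + 1 - k⟩_{d-i} ⟨k⟩_i + ⟨k⟩_d`.
Dividing by `⟨n + 1 - k⟩_d` gives the recurrence, because `⟨n+1 choose k⟩_d` and
`⟨n choose k-1⟩_d` are `⟨n choose k⟩_d` times `⟨n + 1⟩_d / ⟨n + 1 - k⟩_d` and
`⟨k⟩_d / ⟨n + 1 - k⟩_d` respectively.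
-/

/-- The m-th simplicial j-polytopic number ⟨m⟩_j = C(m+j-1, j). -/
def sp (j m : ℕ) : ℕ := Nat.choose (m + j - 1) j

/-- The d-simplitorial ⟨n⟩_d! = ∏_{k=1}^n ⟨k⟩_d, as a rational number. -/
def spFact (d n : ℕ) : ℚ := ∏ k ∈ Finset.Icc 1 n, (sp d k : ℚ)

/-- The d-Hoggatt binomial coefficient ⟨n choose k⟩_d. -/
def hog (d n k : ℕ) : ℚ := spFact d n / (spFact d k * spFact d (n - k))

open Finset PowerSeries

lemma sp_zero_left (m : ℕ) : sp 0 m = 1 := Nat.choose_zero_right _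

lemma sp_pos (d : ℕ) {m : ℕ} (hm : 1 ≤ m) : 0 < sp d m := Nat.choose_pos (by omega)

lemma coeff_invOneSubPow_val (S : Type*) [CommRing S] (m j : ℕ) :
    coeff j (invOneSubPow S m).val = sp j m := by
  cases m with
  | zero => cases j <;> simp [invOneSubPow_zero, sp, coeff_one]
  | succ e =>
    rw [invOneSubPow_val_succ_eq_mk_add_choose, coeff_mk, sp, Nat.choose_symm_add]
    congr 2
    omega

lemma sp_add_eq_sum_antidiagonal (d a b : ℕ) :
    sp d (a + b) = ∑ ij ∈ antidiagonal d, sp ij.1 a * sp ij.2 b := by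
  have h := congrArg (coeff (R := ℤ) d ∘ Units.val) (invOneSubPow_add ℤ a b)
  simp only [Function.comp_apply, Units.val_mul, coeff_mul, coeff_invOneSubPow_val] at h
  exact_mod_cast h

lemma sp_succ_add_eq (e a b : ℕ) :
    sp (e + 1) (a + b) =
      sp (e + 1) a + ∑ i ∈ Icc 1 e, sp (e + 1 - i) a * sp i b + sp (e + 1) b := by
  rw [sp_add_eq_sum_antidiagonal, ← Nat.sum_antidiagonal_swap]
  simp only [Prod.fst_swap, Prod.snd_swap]
  rw [Nat.sum_antidiagonal_eq_sum_range_succ (fun i j => sp j a * sp i b), sum_range_succ,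
    sum_range_eq_add_Ico _ (by omega), Ico_add_one_right_eq_Icc]
  simp [sp_zero_left]

lemma spFact_succ (d n : ℕ) : spFact d (n + 1) = spFact d n * sp d (n + 1) :=
  prod_Icc_succ_top (by omega) _

lemma spFact_ne_zero (d n : ℕ) : spFact d n ≠ 0 :=
  prod_ne_zero_iff.2 fun k hk => by exact_mod_cast (sp_pos d (mem_Icc.1 hk).1).ne'

lemma hog_succ_mul_sp (d : ℕ) {n k : ℕ} (hk : k ≤ n) :
    hog d (n + 1) k * sp d (n + 1 - k) = hog d n k * sp d (n + 1) := by
  have hnk : n + 1 - k = n - k + 1 := by omega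
  have := spFact_ne_zero d k
  have := spFact_ne_zero d (n - k)
  have : (sp d (n - k + 1) : ℚ) ≠ 0 := by exact_mod_cast (sp_pos d (by omega)).ne'
  rw [hog, hog, hnk, spFact_succ, spFact_succ]
  field_simp

lemma hog_mul_sp_sub (d : ℕ) {n j : ℕ} (hj : j < n) :
    hog d n j * sp d (n - j) = hog d n (j + 1) * sp d (j + 1) := by
  have hnj : n - j = n - (j + 1) + 1 := by omega
  have := spFact_ne_zero d j
  have := spFact_ne_zero d (n - (j + 1))
  have : (sp d (n - (j + 1) + 1) : ℚ) ≠ 0 := by exact_mod_cast (sp_pos d (by omega)).ne'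
  have : (sp d (j + 1) : ℚ) ≠ 0 := by exact_mod_cast (sp_pos d (by omega)).ne'
  rw [hog, hog, hnj, spFact_succ, spFact_succ]
  field_simp

theorem hog_pascal (d n k : ℕ) (hd : 2 ≤ d) (hk1 : 1 ≤ k) (hk : k ≤ n) :
    hog d (n + 1) k =
      (1 + (1 / (sp d (n + 1 - k) : ℚ)) *
          ∑ i ∈ Finset.Icc 1 (d - 1), (sp (d - i) (n + 1 - k) : ℚ) * (sp i k : ℚ)) *
        hog d n k + hog d n (k - 1) := by
  obtain ⟨e, rfl⟩ : ∃ e, d = e + 1 := ⟨d - 1, by omega⟩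
  obtain ⟨j, rfl⟩ : ∃ j, k = j + 1 := ⟨k - 1, by omega⟩
  set a := n + 1 - (j + 1)
  have ha : (sp (e + 1) a : ℚ) ≠ 0 := by exact_mod_cast (sp_pos _ (by omega)).ne'
  have hsplit : (sp (e + 1) (n + 1) : ℚ) = sp (e + 1) a +
      ∑ i ∈ Icc 1 e, (sp (e + 1 - i) a : ℚ) * sp i (j + 1) + sp (e + 1) (j + 1) := by
    rw [show n + 1 = a + (j + 1) by omega]
    exact_mod_cast sp_succ_add_eq e a (j + 1)
  have hsucc := hog_succ_mul_sp (e + 1) hk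
  have hpred := hog_mul_sp_sub (e + 1) (show j < n by omega)
  rw [show n - j = a by omega] at hpred
  simp only [add_tsub_cancel_right]
  field_simp
  linear_combination hsucc - hpred + hog (e + 1) n (j + 1) * hsplit
end

section
/- For d ≥ 2 and twice-continuously-differentiable f, g (or polynomials), D_{S_d}(fg) = (D_{S_d} f)·g + f·(D_{S_d} g) + Σ_{k=1}^{d-1} C(d-1,k) (1/(k+1)!) x^k Σ_{i=1}^{k} C(k+1,i) f^{(k+1-i)} g^{(i)}. -/
/-- The simplicial d-polytopic derivative
D_{S_d} f(x) = Σ_{k=0}^{d-1} C(d-1,k)·(1/(k+1)!)·x^k·f^{(k+1)}(x). -/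
noncomputable def DSd (d : ℕ) (f : ℝ → ℝ) : ℝ → ℝ := fun x =>
  ∑ k ∈ Finset.range d,
    (Nat.choose (d - 1) k : ℝ) / (Nat.factorial (k + 1) : ℝ) * x ^ k *
      iteratedDeriv (k + 1) f x

/-!
Each summand of `DSd d (f * g)` carries an iterated derivative of a product, which the general
Leibniz rule expands; its two extreme terms `f^{(k+1)} g` and `f g^{(k+1)}` reassemble into
`(DSd d f) g + f (DSd d g)`, and the remaining cross terms vanish for `k = 0`.
-/

open Finset

namespace Finset

variable {M : Type*} [AddCommMonoid M]

theorem sum_range_add_two_eq_add_sum_Icc_add (a : ℕ → M) (k : ℕ) :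
    ∑ i ∈ range (k + 2), a i = a 0 + ∑ i ∈ Icc 1 k, a i + a (k + 1) := by
  rw [sum_range_eq_add_Ico _ (by omega), sum_Ico_succ_top (by omega), Ico_add_one_right_eq_Icc,
    add_assoc]

theorem sum_range_eq_sum_Icc_one_of_zero {a : ℕ → M} (h₀ : a 0 = 0) :
    ∀ n : ℕ, ∑ i ∈ range n, a i = ∑ i ∈ Icc 1 (n - 1), a i
  | 0 => by simp
  | n + 1 => by
    rw [sum_range_eq_add_Ico _ n.succ_pos, h₀, zero_add, Nat.add_sub_cancel,
      ← Ico_add_one_right_eq_Icc]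
    rfl

end Finset

variable {𝕜 : Type*} [NontriviallyNormedField 𝕜] {𝔸 : Type*} [NormedCommRing 𝔸]
  [NormedAlgebra 𝕜 𝔸]

theorem iteratedDeriv_succ_fun_mul {k : ℕ} {f g : 𝕜 → 𝔸} {x : 𝕜}
    (hf : ContDiffAt 𝕜 (k + 1) f x) (hg : ContDiffAt 𝕜 (k + 1) g x) :
    iteratedDeriv (k + 1) (fun y => f y * g y) x =
      iteratedDeriv (k + 1) f x * g x + f x * iteratedDeriv (k + 1) g x +
        ∑ i ∈ Icc 1 k, ((k + 1).choose i : 𝔸) * iteratedDeriv (k + 1 - i) f x *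
          iteratedDeriv i g x := by
  -- Swapping the factors makes Mathlib's indexing of the Leibniz sum match `g^{(i)}`.
  simp_rw [mul_comm (f _) (g _)]
  rw [iteratedDeriv_fun_mul (by exact_mod_cast hg) (by exact_mod_cast hf),
    sum_range_add_two_eq_add_sum_Icc_add]
  simp only [Nat.choose_zero_right, Nat.choose_self, Nat.cast_one, one_mul, Nat.sub_zero,
    Nat.sub_self, iteratedDeriv_zero]
  rw [sum_congr rfl fun i _ => by rw [mul_right_comm]]
  ring

theorem DSd_leibniz_general (d : ℕ) (f g : ℝ → ℝ)
    (hf : ContDiff ℝ (d : ℕ∞) f) (hg : ContDiff ℝ (d : ℕ∞) g) (x : ℝ) :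
    DSd d (fun y => f y * g y) x =
      DSd d f x * g x + f x * DSd d g x +
        ∑ k ∈ Finset.Icc 1 (d - 1),
          (Nat.choose (d - 1) k : ℝ) / (Nat.factorial (k + 1) : ℝ) * x ^ k *
            ∑ i ∈ Finset.Icc 1 k,
              (Nat.choose (k + 1) i : ℝ) * iteratedDeriv (k + 1 - i) f x *
                iteratedDeriv i g x := by
  have hterm : ∀ k ∈ range d,
      (d - 1).choose k / ((k + 1).factorial : ℝ) * x ^ k *
          iteratedDeriv (k + 1) (fun y => f y * g y) x =
        (d - 1).choose k / ((k + 1).factorial : ℝ) * x ^ k * iteratedDeriv (k + 1) f x * g x +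
          f x * ((d - 1).choose k / ((k + 1).factorial : ℝ) * x ^ k *
            iteratedDeriv (k + 1) g x) +
          (d - 1).choose k / ((k + 1).factorial : ℝ) * x ^ k *
            ∑ i ∈ Icc 1 k, ((k + 1).choose i : ℝ) * iteratedDeriv (k + 1 - i) f x *
              iteratedDeriv i g x := by
    intro k hk
    have hkd : ((k + 1 : ℕ) : WithTop ℕ∞) ≤ d := by exact_mod_cast mem_range.mp hk
    rw [iteratedDeriv_succ_fun_mul (hf.contDiffAt.of_le (by exact_mod_cast hkd))
      (hg.contDiffAt.of_le (by exact_mod_cast hkd))]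
    ring
  rw [DSd, DSd, DSd, sum_congr rfl hterm, sum_add_distrib, sum_add_distrib, sum_mul, mul_sum]
  exact congrArg _ (sum_range_eq_sum_Icc_one_of_zero (by simp) d)

theorem DSd_leibniz (d : ℕ) (hd : 2 ≤ d) (f g : ℝ → ℝ)
    (hf : ContDiff ℝ (d : ℕ∞) f) (hg : ContDiff ℝ (d : ℕ∞) g) (x : ℝ) :
    DSd d (fun y => f y * g y) x =
      DSd d f x * g x + f x * DSd d g x +
        ∑ k ∈ Finset.Icc 1 (d - 1),
          (Nat.choose (d - 1) k : ℝ) / (Nat.factorial (k + 1) : ℝ) * x ^ k *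
            ∑ i ∈ Finset.Icc 1 k,
              (Nat.choose (k + 1) i : ℝ) * iteratedDeriv (k + 1 - i) f x *
                iteratedDeriv i g x :=
  DSd_leibniz_general d f g hf hg x
end
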